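/- Input approximation bound: let π be a prior on X, X' a nonempty proper subset of X with max_{x' ∈ X'} π[x'] ≤ min_{x ∈ X∖X'} π[x], ε = Σ_{x'∈X'} π[x'], and π' the sub-distribution equal to π on X∖X' and 0 on X'. Then I_∞(π', C) ≤ I_∞(π, C) ≤ I_∞(π', C) + log(1 + ε / V(π', C)). -/

import Mathlib

open Finset

namespace QIF15

/-- Prior vulnerability. -/
noncomputable def Vmax {X : Type*} [Fintype X] [Nonempty X] (π : X → ℝ) : ℝ :=
  Finset.univ.sup' Finset.univ_nonempty π

/-- Posterior vulnerability. -/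
noncomputable def Vpost {X Y : Type*} [Fintype X] [Fintype Y] [Nonempty X]
    (π : X → ℝ) (C : X → Y → ℝ) : ℝ :=
  ∑ y, Finset.univ.sup' Finset.univ_nonempty fun x => π x * C x y

/-- Min-entropy leakage (in bits), defined also for sub-probability distributions. -/
noncomputable def Iinf {X Y : Type*} [Fintype X] [Fintype Y] [Nonempty X]
    (π : X → ℝ) (C : X → Y → ℝ) : ℝ :=
  Real.logb 2 (Vpost π C / Vmax π)

/-! Removing the inputs of smallest probability does not change the prior vulnerability, since
the maximum is attained outside the removed set, and it lowers the posterior vulnerability by at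
most their total mass `ε`: the posterior vulnerability is monotone and subadditive in the prior, and
a prior `ρ` contributes at most its mass `∑ x, ρ x`. So `V(π',C) ≤ V(π,C) ≤ V(π',C) + ε` with a
common denominator, and taking logarithms gives both bounds. -/

section Vulnerability

variable {X Y : Type*} [Fintype X] [Fintype Y] [Nonempty X]

theorem Vmax_le_Vmax_of_forall_exists_le {π ρ : X → ℝ} (h : ∀ x, ∃ x', π x ≤ ρ x') :
    Vmax π ≤ Vmax ρ :=
  sup'_le _ _ fun x _ =>
    let ⟨x', hx'⟩ := h x
    hx'.trans (le_sup' ρ (mem_univ x'))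

theorem Vmax_pos_of_Vpost_pos {π : X → ℝ} {C : X → Y → ℝ} (hC0 : ∀ x y, 0 ≤ C x y)
    (h : 0 < Vpost π C) : 0 < Vmax π := by
  by_contra! hπ
  refine h.not_ge (sum_nonpos fun y _ => sup'_le _ _ fun x _ => ?_)
  exact mul_nonpos_of_nonpos_of_nonneg ((le_sup' π (mem_univ x)).trans hπ) (hC0 x y)

theorem Vpost_mono {π ρ : X → ℝ} {C : X → Y → ℝ} (hC0 : ∀ x y, 0 ≤ C x y)
    (h : ∀ x, π x ≤ ρ x) : Vpost π C ≤ Vpost ρ C :=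
  sum_le_sum fun y _ => sup'_mono_fun fun x _ => mul_le_mul_of_nonneg_right (h x) (hC0 x y)

theorem Vpost_add_le (π ρ : X → ℝ) (C : X → Y → ℝ) :
    Vpost (π + ρ) C ≤ Vpost π C + Vpost ρ C := by
  simp only [Vpost]
  rw [← sum_add_distrib]
  refine sum_le_sum fun y _ => sup'_le _ _ fun x _ => ?_
  rw [Pi.add_apply, add_mul]
  exact add_le_add (le_sup' (fun x => π x * C x y) (mem_univ x))
    (le_sup' (fun x => ρ x * C x y) (mem_univ x))

theorem Vpost_le_sum {ρ : X → ℝ} {C : X → Y → ℝ} (hρ0 : ∀ x, 0 ≤ ρ x)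
    (hC0 : ∀ x y, 0 ≤ C x y) (hC1 : ∀ x, ∑ y, C x y = 1) : Vpost ρ C ≤ ∑ x, ρ x :=
  calc Vpost ρ C ≤ ∑ y, ∑ x, ρ x * C x y :=
        sum_le_sum fun y _ => sup'_le _ _ fun x _ =>
          single_le_sum (f := fun x => ρ x * C x y)
            (fun x _ => mul_nonneg (hρ0 x) (hC0 x y)) (mem_univ x)
    _ = ∑ x, ρ x := by simp only [sum_comm (γ := Y), ← mul_sum, hC1, mul_one]

variable [DecidableEq X]

theorem Vmax_ite_eq {π : X → ℝ} {s : Finset X} (hπ0 : ∀ x, 0 ≤ π x) {x₀ : X} (hx₀ : x₀ ∉ s)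
    (hsmall : ∀ x' ∈ s, ∀ x ∉ s, π x' ≤ π x) :
    Vmax (fun x => if x ∈ s then 0 else π x) = Vmax π := by
  refine le_antisymm (Vmax_le_Vmax_of_forall_exists_le fun x => ⟨x, ?_⟩)
    (Vmax_le_Vmax_of_forall_exists_le fun x => ?_)
  · split_ifs
    exacts [hπ0 x, le_rfl]
  · by_cases hx : x ∈ s
    · exact ⟨x₀, by simpa [hx₀] using hsmall x hx x₀ hx₀⟩
    · exact ⟨x, by simp [hx]⟩

theorem Vpost_le_Vpost_ite_add_sum {π : X → ℝ} {C : X → Y → ℝ} (s : Finset X)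
    (hπ0 : ∀ x, 0 ≤ π x) (hC0 : ∀ x y, 0 ≤ C x y) (hC1 : ∀ x, ∑ y, C x y = 1) :
    Vpost π C ≤ Vpost (fun x => if x ∈ s then 0 else π x) C + ∑ x ∈ s, π x := by
  have hsplit : π = (fun x => if x ∈ s then 0 else π x) + fun x => if x ∈ s then π x else 0 := by
    ext x
    by_cases hx : x ∈ s <;> simp [hx]
  have hmass : Vpost (fun x => if x ∈ s then π x else 0) C ≤ ∑ x ∈ s, π x := by
    simpa only [sum_ite_mem, univ_inter] using
      Vpost_le_sum (ρ := fun x => if x ∈ s then π x else 0)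
        (fun x => by split_ifs; exacts [hπ0 x, le_rfl]) hC0 hC1
  calc Vpost π C
      ≤ Vpost (fun x => if x ∈ s then 0 else π x) C
          + Vpost (fun x => if x ∈ s then π x else 0) C := by
        conv_lhs => rw [hsplit]
        exact Vpost_add_le _ _ C
    _ ≤ _ := by gcongr

end Vulnerability

theorem logb_div_le_logb_div_add_logb_one_add {b a a' v ε : ℝ} (hb : 1 < b) (ha : 0 < a)
    (ha' : 0 < a') (hv : 0 < v) (hle : a ≤ a' + ε) :
    Real.logb b (a / v) ≤ Real.logb b (a' / v) + Real.logb b (1 + ε / a') := by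
  have hε : 0 < 1 + ε / a' := by
    rw [one_add_div ha'.ne']
    exact div_pos (ha.trans_le hle) ha'
  rw [← Real.logb_mul (div_pos ha' hv).ne' hε.ne']
  refine Real.logb_le_logb_of_le hb (div_pos ha hv) ?_
  rw [show a' / v * (1 + ε / a') = (a' + ε) / v by field_simp]
  exact div_le_div_of_nonneg_right hle hv.le

theorem input_approximation_bounds_general {X Y : Type*} [DecidableEq X]
    [Fintype X] [Fintype Y] [Nonempty X]
    (π : X → ℝ) (C : X → Y → ℝ) (X' : Finset X)
    (hπ0 : ∀ x, 0 ≤ π x)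
    (hC0 : ∀ x y, 0 ≤ C x y) (hC1 : ∀ x, ∑ y, C x y = 1)
    (hsmall : ∀ x' ∈ X', ∀ x ∉ X', π x' ≤ π x)
    (hVpos : 0 < Vpost (fun x => if x ∈ X' then 0 else π x) C) :
    Iinf (fun x => if x ∈ X' then 0 else π x) C ≤ Iinf π C
      ∧ Iinf π C
          ≤ Iinf (fun x => if x ∈ X' then 0 else π x) C
            + Real.logb 2
              (1 + (∑ x' ∈ X', π x')
                / Vpost (fun x => if x ∈ X' then 0 else π x) C) := by
  set π' : X → ℝ := fun x => if x ∈ X' then 0 else π x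
  have hVmax'pos : 0 < Vmax π' := Vmax_pos_of_Vpost_pos hC0 hVpos
  obtain ⟨x₀, -, hx₀max⟩ := exists_mem_eq_sup' univ_nonempty π'
  have hx₀ : x₀ ∉ X' := fun hx₀ => by
    simp only [Vmax, π', hx₀max, if_pos hx₀, lt_irrefl] at hVmax'pos
  have hVmax : Vmax π' = Vmax π := Vmax_ite_eq hπ0 hx₀ hsmall
  have hVpost_le : Vpost π' C ≤ Vpost π C :=
    Vpost_mono hC0 fun x => by simp only [π']; split_ifs; exacts [hπ0 x, le_rfl]
  rw [hVmax] at hVmax'pos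
  simp only [Iinf, hVmax]
  exact ⟨Real.logb_le_logb_of_le one_lt_two (div_pos hVpos hVmax'pos)
      (div_le_div_of_nonneg_right hVpost_le hVmax'pos.le),
    logb_div_le_logb_div_add_logb_one_add one_lt_two (hVpos.trans_le hVpost_le) hVpos hVmax'pos
      (Vpost_le_Vpost_ite_add_sum X' hπ0 hC0 hC1)⟩

/-- Input approximation: removing the smallest input probabilities (of total mass ε)
perturbs the min-entropy leakage by at most `log(1 + ε / V(π',C))`. -/
theorem input_approximation_bounds {X Y : Type*} [DecidableEq X]
    [Fintype X] [Fintype Y] [Nonempty X]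
    (π : X → ℝ) (C : X → Y → ℝ) (X' : Finset X)
    (hπ0 : ∀ x, 0 ≤ π x) (hπ1 : ∑ x, π x = 1)
    (hC0 : ∀ x y, 0 ≤ C x y) (hC1 : ∀ x, ∑ y, C x y = 1)
    (hne : X'.Nonempty) (hproper : X' ≠ Finset.univ)
    (hsmall : ∀ x' ∈ X', ∀ x ∉ X', π x' ≤ π x)
    (hVpos : 0 < Vpost (fun x => if x ∈ X' then 0 else π x) C) :
    Iinf (fun x => if x ∈ X' then 0 else π x) C ≤ Iinf π C
      ∧ Iinf π C
          ≤ Iinf (fun x => if x ∈ X' then 0 else π x) C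
            + Real.logb 2
              (1 + (∑ x' ∈ X', π x')
                / Vpost (fun x => if x ∈ X' then 0 else π x) C) :=
  input_approximation_bounds_general π C X' hπ0 hC0 hC1 hsmall hVpos

end QIF15
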